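/- arXiv:2309.02374 — 4 statements merged into one kernel-verified Lean document; each statement's English description precedes it below -/
import Mathlib

section
/- Let R be a finite set of cardinality 2d+2 with d even, and let V be the quotient of the space of even-sized subsets of R by the subspace generated by R. For each odd-sized subset T ⊆ R, the map q_T(S) = #(S ∩ T) + (#S)/2 mod 2 is a well-defined quadratic refinement of the intersection pairing e on V. Moreover, T and its complement define the same refinement, and the resulting map from {odd-sized subsets of R modulo complementation} to the set of quadratic refinements of e is a bijection. -/
/-!
Identify a vector of `V₀` with its support, an even subset `A ⊆ R`. Since
`#(A ∆ B) = #A + #B - 2 #(A ∩ B)`, each `q_T` refines `e`. Replacing `A` by `Aᶜ` changes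
`q_T` by `#T + #R / 2 ≡ 1 + d + 1 ≡ 0`, so `q_T` descends to the quotient, and replacing `T`
by `Tᶜ` changes it by `#A ≡ 0`. On a pair `{a, b}`, `q_T` reads off `[a ∈ T] + [b ∈ T]`, which
recovers `T` up to complement. Conversely, for any refinement `q` the sum `q + q_∅` is linear,
hence (extended to all of `(ZMod 2)^R`) of the form `A ↦ #(A ∩ W)`; then `q = q_W`, and `W` is
odd because `q(R) = 0` while `q_∅(R) = #R / 2` is odd.
-/

open Finset
open scoped symmDiff

theorem ZMod.eq_zero_or_eq_one (a : ZMod 2) : a = 0 ∨ a = 1 := by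
  revert a; decide

section CardParity

variable {α : Type*} [DecidableEq α]

theorem Finset.card_symmDiff_add_two_mul_card_inter (s t : Finset α) :
    #(s ∆ t) + 2 * #(s ∩ t) = #s + #t := by
  have hs := card_sdiff_add_card_inter s t
  have ht := card_sdiff_add_card_inter t s
  rw [inter_comm] at ht
  rw [symmDiff_def, sup_eq_union, card_union_of_disjoint disjoint_sdiff_sdiff]
  omega

/-- The paper's `q_T(A) = #(A ∩ T) + #A / 2`; the division is exact only for even `A`. -/
def quadRefinement (T A : Finset α) : ZMod 2 :=
  (#(A ∩ T) + #A / 2 : ℕ)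

theorem quadRefinement_symmDiff (T : Finset α) {A B : Finset α} (hA : Even #A) (hB : Even #B) :
    quadRefinement T (A ∆ B) = quadRefinement T A + quadRefinement T B + #(A ∩ B) := by
  have hAB := card_symmDiff_add_two_mul_card_inter A B
  have hABT := card_symmDiff_add_two_mul_card_inter (A ∩ T) (B ∩ T)
  rw [← show A ∆ B ∩ T = (A ∩ T) ∆ (B ∩ T) from inf_symmDiff_distrib_right A B T]
    at hABT
  simp only [quadRefinement, ← Nat.cast_add, ZMod.natCast_eq_natCast_iff']
  obtain ⟨a, ha⟩ := hA
  obtain ⟨b, hb⟩ := hB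
  omega

theorem quadRefinement_eq_card_inter_add (T A : Finset α) :
    quadRefinement T A = #(A ∩ T) + quadRefinement ∅ A := by
  simp [quadRefinement]

variable [Fintype α]

theorem natCast_card_inter_compl {A : Finset α} (hA : Even #A) (T : Finset α) :
    (#(A ∩ Tᶜ) : ZMod 2) = #(A ∩ T) := by
  have := card_sdiff_add_card_inter A T
  rw [sdiff_eq_inter_compl] at this
  rw [ZMod.natCast_eq_natCast_iff']
  obtain ⟨a, ha⟩ := hA
  omega

theorem quadRefinement_compl_left {A : Finset α} (hA : Even #A) (T : Finset α) :
    quadRefinement Tᶜ A = quadRefinement T A := by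
  simp only [quadRefinement, Nat.cast_add, natCast_card_inter_compl hA]

theorem quadRefinement_empty_univ (hα : Fintype.card α % 4 = 2) :
    quadRefinement ∅ (univ : Finset α) = 1 := by
  rw [quadRefinement, inter_empty, card_empty, card_univ, zero_add, ← Nat.cast_one,
    ZMod.natCast_eq_natCast_iff']
  omega

theorem quadRefinement_compl_right (hα : Fintype.card α % 4 = 2) {T A : Finset α}
    (hT : Odd #T) (hA : Even #A) : quadRefinement T Aᶜ = quadRefinement T A := by
  have hcompl := card_add_card_compl A
  have hT' := card_sdiff_add_card_inter T A
  rw [sdiff_eq_inter_compl, inter_comm] at hT'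
  simp only [quadRefinement, ZMod.natCast_eq_natCast_iff']
  rw [inter_comm A T]
  obtain ⟨a, ha⟩ := hA
  obtain ⟨t, ht⟩ := hT
  omega

theorem eq_or_eq_compl_of_quadRefinement_pair_eq {T T' : Finset α}
    (h : ∀ a b, a ≠ b → quadRefinement T {a, b} = quadRefinement T' {a, b}) :
    T' = T ∨ T' = Tᶜ := by
  have hiff : ∀ a b, ((a ∈ T' ↔ a ∈ T) ↔ (b ∈ T' ↔ b ∈ T)) := by
    intro a b
    by_cases hab : a = b
    · rw [hab]
    have := h a b hab
    by_cases ha : a ∈ T <;> by_cases hb : b ∈ T <;> by_cases ha' : a ∈ T' <;>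
      by_cases hb' : b ∈ T' <;>
      simp [quadRefinement, ha, hb, ha', hb', hab, insert_inter_of_mem,
        insert_inter_of_notMem] at this ⊢ <;>
      exact absurd this (by decide)
  by_cases hT : ∀ a, a ∈ T' ↔ a ∈ T
  · exact Or.inl (ext hT)
  · obtain ⟨a, ha⟩ := not_forall.1 hT
    exact Or.inr (ext fun b => by rw [mem_compl]; have := hiff a b; tauto)

end CardParity

section Vectors

variable {R : Type*} [Fintype R]

def oneSet (v : R → ZMod 2) : Finset R := {r | v r = 1}

theorem oneSet_one : oneSet (fun _ => 1 : R → ZMod 2) = univ := by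
  simp [oneSet]

variable [DecidableEq R]

theorem oneSet_add (v w : R → ZMod 2) : oneSet (v + w) = oneSet v ∆ oneSet w := by
  ext r
  simp only [oneSet, mem_filter_univ, mem_symmDiff, Pi.add_apply]
  rcases ZMod.eq_zero_or_eq_one (v r) with h | h <;>
    rcases ZMod.eq_zero_or_eq_one (w r) with h' | h' <;> simp [h, h']

theorem oneSet_add_one (v : R → ZMod 2) : oneSet (v + fun _ => 1) = (oneSet v)ᶜ := by
  ext r
  simp only [oneSet, mem_filter_univ, mem_compl, Pi.add_apply]
  rcases ZMod.eq_zero_or_eq_one (v r) with h | h <;> simp [h]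

theorem oneSet_indicator (s : Finset R) :
    oneSet (fun r => if r ∈ s then 1 else 0 : R → ZMod 2) = s := by
  ext r
  by_cases hr : r ∈ s <;> simp [oneSet, hr]

theorem sum_mul_eq_card_oneSet_inter (v w : R → ZMod 2) :
    ∑ r, v r * w r = #(oneSet v ∩ oneSet w) := by
  rw [oneSet, oneSet, ← filter_and, card_filter, Nat.cast_sum]
  refine sum_congr rfl fun r _ => ?_
  rcases ZMod.eq_zero_or_eq_one (v r) with h | h <;>
    rcases ZMod.eq_zero_or_eq_one (w r) with h' | h' <;> simp [h, h']

theorem sum_eq_zero_iff_even_card_oneSet (v : R → ZMod 2) :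
    ∑ r, v r = 0 ↔ Even #(oneSet v) := by
  simpa [oneSet_one, ZMod.natCast_eq_zero_iff_even] using
    congrArg (· = 0) (sum_mul_eq_card_oneSet_inter v fun _ => 1)

theorem quadRefinement_oneSet_add (T : Finset R) {v w : R → ZMod 2} (hv : Even #(oneSet v))
    (hw : Even #(oneSet w)) :
    quadRefinement T (oneSet (v + w)) =
      quadRefinement T (oneSet v) + quadRefinement T (oneSet w) + ∑ r, v r * w r := by
  rw [oneSet_add, quadRefinement_symmDiff T hv hw, sum_mul_eq_card_oneSet_inter]

theorem eq_or_eq_compl_of_quadRefinement_oneSet_eq {V₀ : Submodule (ZMod 2) (R → ZMod 2)}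
    (hV₀ : ∀ v : R → ZMod 2, ∑ r, v r = 0 → v ∈ V₀) {T T' : Finset R}
    (h : ∀ S : V₀, quadRefinement T (oneSet (S : R → ZMod 2)) =
      quadRefinement T' (oneSet (S : R → ZMod 2))) :
    T' = T ∨ T' = Tᶜ := by
  refine eq_or_eq_compl_of_quadRefinement_pair_eq fun a b hab => ?_
  have hab_mem : (fun r => if r ∈ ({a, b} : Finset R) then 1 else 0) ∈ V₀ := by
    refine hV₀ _ ((sum_eq_zero_iff_even_card_oneSet _).2 ?_)
    rw [oneSet_indicator, card_pair hab]
    exact even_two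
  simpa only [oneSet_indicator] using h ⟨_, hab_mem⟩

theorem exists_finset_eq_card_oneSet_inter {V₀ : Submodule (ZMod 2) (R → ZMod 2)}
    (l : V₀ →ₗ[ZMod 2] ZMod 2) :
    ∃ W : Finset R, ∀ S : V₀, l S = #(oneSet (S : R → ZMod 2) ∩ W) := by
  obtain ⟨g, hg⟩ := l.exists_extend
  refine ⟨oneSet fun r => g fun j => if r = j then 1 else 0, fun S => ?_⟩
  rw [← hg, LinearMap.comp_apply, Submodule.subtype_apply, LinearMap.pi_apply_eq_sum_univ,
    ← sum_mul_eq_card_oneSet_inter]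
  rfl

theorem exists_odd_finset_eq_quadRefinement (hR : Fintype.card R % 4 = 2)
    {V₀ : Submodule (ZMod 2) (R → ZMod 2)} (hV₀ : ∀ S : V₀, Even #(oneSet (S : R → ZMod 2)))
    {q : V₀ → ZMod 2} (hq : ∀ S S' : V₀,
      q (S + S') = q S + q S' + ∑ r, (S : R → ZMod 2) r * (S' : R → ZMod 2) r)
    {one : V₀} (hone : (one : R → ZMod 2) = fun _ => 1) (hq_one : q one = 0) :
    ∃ T : Finset R, Odd #T ∧
      ∀ S : V₀, q S = quadRefinement T (oneSet (S : R → ZMod 2)) := by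
  let l : V₀ →+ ZMod 2 :=
    AddMonoidHom.mk' (fun S => q S + quadRefinement ∅ (oneSet (S : R → ZMod 2))) fun S S' => by
      rw [hq, Submodule.coe_add, quadRefinement_oneSet_add ∅ (hV₀ S) (hV₀ S')]
      linear_combination
        CharTwo.add_self_eq_zero (∑ r, (S : R → ZMod 2) r * (S' : R → ZMod 2) r)
  obtain ⟨W, hW⟩ := exists_finset_eq_card_oneSet_inter (l.toZModLinearMap 2)
  refine ⟨W, ?_, fun S => ?_⟩
  · have := hW one
    rwa [AddMonoidHom.coe_toZModLinearMap, AddMonoidHom.mk'_apply, hq_one, hone, oneSet_one,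
      univ_inter, quadRefinement_empty_univ hR, zero_add, eq_comm, ZMod.natCast_eq_one_iff_odd]
      at this
  · rw [quadRefinement_eq_card_inter_add, ← hW, AddMonoidHom.coe_toZModLinearMap,
      AddMonoidHom.mk'_apply, add_assoc, CharTwo.add_self_eq_zero, add_zero]

end Vectors

section Quotient

variable {M : Type*} [AddCommGroup M] [Module (ZMod 2) M]

theorem Submodule.Quotient.eq_or_eq_add_of_mk_eq {x a b : M}
    (h : (mk a : M ⧸ span (ZMod 2) {x}) = mk b) : b = a ∨ b = a + x := by
  obtain ⟨c, hc⟩ := mem_span_singleton.1 ((Submodule.Quotient.eq _).1 h)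
  rcases ZMod.eq_zero_or_eq_one c with rfl | rfl
  · exact Or.inl (sub_eq_zero.1 (by simpa using hc.symm)).symm
  · rw [one_smul, ZModModule.sub_eq_add] at hc
    rw [hc, ← add_assoc, ZModModule.add_self, zero_add]
    exact Or.inr rfl

def Submodule.liftSpanSingleton {β : Type*} (x : M) (f : M → β) (hf : ∀ a, f (a + x) = f a) :
    M ⧸ Submodule.span (ZMod 2) {x} → β :=
  Quotient.lift f fun a b h => by
    rcases Submodule.Quotient.eq_or_eq_add_of_mk_eq (Quotient.sound h) with rfl | rfl
    · rfl
    · exact (hf a).symm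

@[simp]
theorem Submodule.liftSpanSingleton_mk {β : Type*} (x : M) (f : M → β)
    (hf : ∀ a, f (a + x) = f a) (a : M) : liftSpanSingleton x f hf (Quotient.mk a) = f a :=
  rfl

end Quotient

/-- For `d` even, the maps `q_T(S) = #(S ∩ T) + (#S)/2 mod 2`, for `T ⊆ R`
of odd size, are well-defined quadratic refinements of the intersection pairing `e`;
complementary sets define the same refinement, and the induced map from odd subsets
modulo complementation to quadratic refinements of `e` is a bijection. -/
theorem stmt_2 (d : ℕ) (hd : Even d) (R : Type) [Fintype R] [DecidableEq R]
    (hR : Fintype.card R = 2 * d + 2)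
    (V₀ : Submodule (ZMod 2) (R → ZMod 2))
    (hV₀ : ∀ v : R → ZMod 2, v ∈ V₀ ↔ ∑ r, v r = 0)
    (one : V₀) (hone : (one : R → ZMod 2) = fun _ => 1)
    (e : (V₀ ⧸ Submodule.span (ZMod 2) {one}) →
        (V₀ ⧸ Submodule.span (ZMod 2) {one}) → ZMod 2)
    (he : ∀ S T : V₀, e (Submodule.Quotient.mk S) (Submodule.Quotient.mk T)
        = ∑ r, (S : R → ZMod 2) r * (T : R → ZMod 2) r) :
    ∃ F : {T : Finset R // Odd T.card} →
        ((V₀ ⧸ Submodule.span (ZMod 2) {one}) → ZMod 2),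
      (∀ T (S : V₀), F T (Submodule.Quotient.mk S)
          = ((((Finset.univ.filter fun r => (S : R → ZMod 2) r = 1) ∩ T.1).card
              + (Finset.univ.filter fun r => (S : R → ZMod 2) r = 1).card / 2 : ℕ) : ZMod 2)) ∧
      (∀ T v w, F T (v + w) = F T v + F T w + e v w) ∧
      (∀ T T' : {T : Finset R // Odd T.card}, T'.1 = (T.1)ᶜ → F T' = F T) ∧
      (∀ T T' : {T : Finset R // Odd T.card}, F T = F T' → T'.1 = T.1 ∨ T'.1 = (T.1)ᶜ) ∧
      (∀ q : (V₀ ⧸ Submodule.span (ZMod 2) {one}) → ZMod 2,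
        (∀ v w, q (v + w) = q v + q w + e v w) → ∃ T, F T = q) := by
  have hR4 : Fintype.card R % 4 = 2 := by obtain ⟨k, rfl⟩ := hd; omega
  have hV₀even (S : V₀) : Even #(oneSet (S : R → ZMod 2)) :=
    (sum_eq_zero_iff_even_card_oneSet _).1 ((hV₀ S).1 S.2)
  let F (T : {T : Finset R // Odd #T}) : V₀ ⧸ Submodule.span (ZMod 2) {one} → ZMod 2 :=
    Submodule.liftSpanSingleton one (fun S => quadRefinement T.1 (oneSet (S : R → ZMod 2)))
      fun S => by
        rw [Submodule.coe_add, hone, oneSet_add_one,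
          quadRefinement_compl_right hR4 T.2 (hV₀even S)]
  refine ⟨F, fun T S => rfl, ?_, ?_, ?_, ?_⟩
  · intro T v w
    obtain ⟨S, rfl⟩ := Submodule.Quotient.mk_surjective _ v
    obtain ⟨S', rfl⟩ := Submodule.Quotient.mk_surjective _ w
    rw [← Submodule.Quotient.mk_add, he]
    exact quadRefinement_oneSet_add T.1 (hV₀even S) (hV₀even S')
  · intro T T' hT'
    funext v
    obtain ⟨S, rfl⟩ := Submodule.Quotient.mk_surjective _ v
    simp only [F, Submodule.liftSpanSingleton_mk, hT']
    exact quadRefinement_compl_left (hV₀even S) T.1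
  · exact fun T T' hF => eq_or_eq_compl_of_quadRefinement_oneSet_eq (fun v => (hV₀ v).2)
      fun S => congrFun hF (Submodule.Quotient.mk S)
  · intro q hq
    have hq_zero : q 0 = 0 := by
      have h := hq 0 0
      rw [add_zero, ← Submodule.Quotient.mk_zero, he] at h
      simpa [CharTwo.add_self_eq_zero] using h
    obtain ⟨T, hT, hqT⟩ := exists_odd_finset_eq_quadRefinement hR4 hV₀even
      (q := q ∘ Submodule.Quotient.mk)
      (fun S S' => by rw [Function.comp_apply, Submodule.Quotient.mk_add, hq, he]; rfl) hone
      (by rwa [Function.comp_apply, (Submodule.Quotient.mk_eq_zero _).2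
        (Submodule.mem_span_singleton_self one)])
    refine ⟨⟨T, hT⟩, funext fun v => ?_⟩
    obtain ⟨S, rfl⟩ := Submodule.Quotient.mk_surjective _ v
    exact (hqT S).symm
end

section
/- Let d ≥ 2 and let V be the quotient of the F₂-space of even-sized subsets of a (2d+2)-element set R by the span of R, with its natural action of the symmetric group G = Sym(R). Then V is a simple F₂[G]-module and every G-equivariant F₂-linear endomorphism of V is scalar, i.e. End_G(V) = F₂. -/
/-!
The classes `[δ_a - δ_b]` span the heart and `Sym(R)` moves any of them to any other, so an
invariant subspace containing one of them is everything. A nonzero invariant subspace does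
contain one, because `[S] - (a b)·[S] = (S a - S b) [δ_a - δ_b]`. An equivariant endomorphism
sends `[δ_a - δ_b]` to a vector fixed by the stabiliser of `a` and `b`; such a vector is
represented by an `S` constant off `{a, b}`, and as `#R = 0` in `k` the sum condition forces
`S a + S b` to be twice that constant, so the vector is a multiple of `[δ_a - δ_b]`.
-/

open Finset Submodule

variable {k R : Type*} [CommRing k] [Fintype R]

variable (k R) in
def sumZero : Submodule k (R → k) where
  carrier := {v | ∑ r, v r = 0}
  add_mem' {v w} hv hw := by simp_all [sum_add_distrib]
  zero_mem' := by simp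
  smul_mem' c v hv := by simp_all [← mul_sum]

namespace sumZero

theorem mem_iff {v : R → k} : v ∈ sumZero k R ↔ ∑ r, v r = 0 := Iff.rfl

def permute (σ : Equiv.Perm R) : sumZero k R →ₗ[k] sumZero k R :=
  (LinearMap.funLeft k k σ.symm).restrict fun v hv => by
    rw [mem_iff] at hv ⊢
    simpa [LinearMap.funLeft_apply, Equiv.sum_comp] using hv

@[simp]
theorem permute_apply (σ : Equiv.Perm R) (S : sumZero k R) (r : R) :
    (permute σ S : R → k) r = (S : R → k) (σ.symm r) := rfl

variable (k R) in
def constants : Submodule k (sumZero k R) where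
  carrier := {S | ∀ a b, (S : R → k) a = (S : R → k) b}
  add_mem' hS hT a b := by simp [hS a b, hT a b]
  zero_mem' _ _ := rfl
  smul_mem' c S hS a b := by simp [hS a b]

theorem span_singleton_eq_constants [Nonempty R] {one : sumZero k R}
    (hone : (one : R → k) = fun _ => 1) : span k {one} = constants k R := by
  apply le_antisymm
  · rw [span_le, Set.singleton_subset_iff]
    intro a b
    simp [hone]
  · intro S hS
    obtain ⟨r₀⟩ := ‹Nonempty R›
    refine mem_span_singleton.mpr ⟨(S : R → k) r₀, ?_⟩
    ext r
    simp [hone, hS r₀ r]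

variable [DecidableEq R]

def pair (a b : R) : sumZero k R := ⟨Pi.single a 1 - Pi.single b 1, by simp [mem_iff]⟩

@[simp]
theorem pair_apply (a b r : R) :
    ((pair a b : sumZero k R) : R → k) r = (if r = a then 1 else 0) - (if r = b then 1 else 0) := by
  simp [pair, Pi.single_apply]

@[simp]
theorem pair_self (a : R) : pair a a = (0 : sumZero k R) := by
  ext r; simp

theorem permute_pair (σ : Equiv.Perm R) (a b : R) :
    permute σ (pair a b) = (pair (σ a) (σ b) : sumZero k R) := by
  ext r; simp [Equiv.symm_apply_eq]

theorem eq_sum_smul_pair (r₀ : R) (S : sumZero k R) : S = ∑ r, (S : R → k) r • pair r r₀ := by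
  ext x
  simp [Finset.sum_apply, mul_sub, sum_sub_distrib, mem_iff.mp S.2]

theorem sub_permute_swap (S : sumZero k R) (a b : R) :
    S - permute (Equiv.swap a b) S = ((S : R → k) a - (S : R → k) b) • pair a b := by
  ext r
  rcases eq_or_ne a b with rfl | hab
  · simp
  by_cases hra : r = a
  · subst hra; simp [hab]
  by_cases hrb : r = b
  · subst hrb; simp [hab.symm]
  · simp [hra, hrb, Equiv.swap_apply_of_ne_of_ne]

theorem apply_add_apply_eq_two_mul (hn : (Fintype.card R : k) = 0) {a b : R}
    (hab : a ≠ b) (S : sumZero k R) {ε : k} (hS : ∀ r, r ≠ a → r ≠ b → (S : R → k) r = ε) :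
    (S : R → k) a + (S : R → k) b = 2 * ε := by
  have hcard : 2 ≤ Fintype.card R := (card_pair hab).symm.le.trans (card_le_univ _)
  have hsum := mem_iff.mp S.2
  rw [← sum_add_sum_compl {a, b}, sum_pair hab,
    sum_congr rfl fun r hr => hS r (by simp_all) (by simp_all), sum_const, card_compl,
    card_pair hab, nsmul_eq_mul, Nat.cast_sub hcard, hn] at hsum
  linear_combination hsum

end sumZero

open sumZero

/-- For `k = ZMod 2` and `#R` even, this is the module of even subsets of `R` modulo `R`. -/
abbrev Heart (k R : Type*) [CommRing k] [Fintype R] := sumZero k R ⧸ constants k R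

namespace Heart

variable (k) in
def perm (σ : Equiv.Perm R) : Heart k R →ₗ[k] Heart k R :=
  (constants k R).mapQ _ (permute σ) fun _ hS _ _ => hS _ _

theorem perm_mk (σ : Equiv.Perm R) (S : sumZero k R) :
    perm k σ (Submodule.Quotient.mk S) = Submodule.Quotient.mk (permute σ S) := rfl

theorem permute_eq_of_perm_mk_eq {σ : Equiv.Perm R} {a : R} (hσ : σ a = a) {S : sumZero k R}
    (h : perm k σ (Submodule.Quotient.mk S) = Submodule.Quotient.mk S) : permute σ S = S := by
  rw [perm_mk, Submodule.Quotient.eq] at h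
  rw [← sub_eq_zero]
  ext r
  simpa [σ.symm_apply_eq.mpr hσ.symm] using h r a

variable [DecidableEq R]

theorem eq_top_of_mk_pair_mem (W : Submodule k (Heart k R))
    (hW : ∀ σ, ∀ v ∈ W, perm k σ v ∈ W) {a b : R} (hab : a ≠ b)
    (h : Submodule.Quotient.mk (pair a b) ∈ W) : W = ⊤ := by
  have hpair : ∀ c e, c ≠ e → Submodule.Quotient.mk (pair c e) ∈ W := by
    intro c e hce
    obtain ⟨σ, rfl, rfl⟩ :=
      MulAction.is_two_pretransitive_iff.mp (Equiv.Perm.isMultiplyPretransitive R 2) hab hce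
    simpa [perm_mk, permute_pair] using hW σ _ h
  rw [eq_top_iff']
  rintro ⟨S⟩
  rw [Submodule.Quotient.quot_mk_eq_mk, eq_sum_smul_pair b S, ← mkQ_apply, map_sum]
  refine sum_mem fun r _ => ?_
  rw [map_smul, mkQ_apply]
  refine W.smul_mem _ ?_
  rcases eq_or_ne r b with rfl | hrb
  · simp
  · exact hpair r b hrb

theorem eq_of_apply_mk_pair_eq {φ ψ : Heart k R →ₗ[k] Heart k R}
    (hφ : ∀ σ v, φ (perm k σ v) = perm k σ (φ v)) (hψ : ∀ σ v, ψ (perm k σ v) = perm k σ (ψ v))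
    {a b : R} (hab : a ≠ b)
    (h : φ (Submodule.Quotient.mk (pair a b)) = ψ (Submodule.Quotient.mk (pair a b))) : φ = ψ := by
  refine LinearMap.eqLocus_eq_top.mp (eq_top_of_mk_pair_mem _ (fun σ v hv => ?_) hab h)
  rw [LinearMap.mem_eqLocus] at hv ⊢
  rw [hφ, hψ, hv]

theorem nontrivial [Nontrivial k] (hR : 2 < Fintype.card R) : Nontrivial (Heart k R) := by
  obtain ⟨a, b, c, hab, hac, hbc⟩ := Fintype.two_lt_card_iff.mp hR
  refine ⟨Submodule.Quotient.mk (pair a b), 0, fun h => ?_⟩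
  have := (Submodule.Quotient.mk_eq_zero _).mp h a c
  simp [hac.symm, hbc.symm, hab] at this

theorem exists_eq_smul_mk_pair_of_fixed (hn : (Fintype.card R : k) = 0) {a b c : R} (hab : a ≠ b)
    (hac : a ≠ c) (hbc : b ≠ c) (x : Heart k R)
    (hx : ∀ σ : Equiv.Perm R, σ a = a → σ b = b → perm k σ x = x) :
    ∃ t : k, x = t • Submodule.Quotient.mk (pair a b) := by
  obtain ⟨S, rfl⟩ := Submodule.Quotient.mk_surjective _ x
  have hS : ∀ r, r ≠ a → r ≠ b → (S : R → k) r = (S : R → k) c := by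
    intro r hra hrb
    have hfix := permute_eq_of_perm_mk_eq (Equiv.swap_apply_of_ne_of_ne hra.symm hac) <|
      hx _ (Equiv.swap_apply_of_ne_of_ne hra.symm hac)
        (Equiv.swap_apply_of_ne_of_ne hrb.symm hbc)
    simpa using congr_arg (fun T : sumZero k R => (T : R → k) c) hfix
  have hsum_ab := apply_add_apply_eq_two_mul hn hab S hS
  refine ⟨(S : R → k) a - (S : R → k) c, ?_⟩
  rw [← Submodule.Quotient.mk_smul, Submodule.Quotient.eq]
  have hconst : ∀ r, ((S - ((S : R → k) a - (S : R → k) c) • pair a b : sumZero k R) : R → k) r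
      = (S : R → k) c := by
    intro r
    by_cases hra : r = a
    · subst hra; simp [hab]
    by_cases hrb : r = b
    · subst hrb; simp [hra]; linear_combination hsum_ab
    · simp [hra, hrb, hS r hra hrb]
  intro r s
  rw [hconst, hconst]

theorem exists_eq_smul_id (hn : (Fintype.card R : k) = 0) (hR : 2 < Fintype.card R)
    {φ : Heart k R →ₗ[k] Heart k R} (hφ : ∀ σ v, φ (perm k σ v) = perm k σ (φ v)) :
    ∃ t : k, φ = t • LinearMap.id := by
  obtain ⟨a, b, c, hab, hac, hbc⟩ := Fintype.two_lt_card_iff.mp hR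
  obtain ⟨t, ht⟩ := exists_eq_smul_mk_pair_of_fixed hn hab hac hbc
    (φ (Submodule.Quotient.mk (pair a b))) fun σ ha hb => by rw [← hφ, perm_mk, permute_pair, ha, hb]
  exact ⟨t, eq_of_apply_mk_pair_eq hφ (fun σ v => by simp) hab (by simpa using ht)⟩

end Heart

section Field

variable {K : Type*} [Field K] [DecidableEq R]

namespace Heart

theorem eq_bot_or_eq_top (W : Submodule K (Heart K R))
    (hW : ∀ σ, ∀ v ∈ W, perm K σ v ∈ W) : W = ⊥ ∨ W = ⊤ := by
  refine or_iff_not_imp_left.mpr fun hbot => ?_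
  obtain ⟨x, hxW, hx0⟩ := W.exists_mem_ne_zero_of_ne_bot hbot
  obtain ⟨S, rfl⟩ := Submodule.Quotient.mk_surjective _ x
  obtain ⟨a, b, hab⟩ : ∃ a b, (S : R → K) a ≠ (S : R → K) b := by
    by_contra! h
    exact hx0 ((Submodule.Quotient.mk_eq_zero _).mpr h)
  refine eq_top_of_mk_pair_mem W hW (ne_of_apply_ne _ hab) ?_
  have hsub := W.sub_mem hxW (hW (Equiv.swap a b) _ hxW)
  rw [perm_mk, ← Submodule.Quotient.mk_sub, sub_permute_swap, Submodule.Quotient.mk_smul] at hsub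
  exact (W.smul_mem_iff (sub_ne_zero.mpr hab)).mp hsub

end Heart

end Field

/-- For `d ≥ 2`, `V` is a simple `F₂[Sym(R)]`-module and every equivariant
endomorphism of `V` is scalar (i.e. `0` or the identity). -/
theorem stmt_3 (d : ℕ) (hd : 2 ≤ d) (R : Type) [Fintype R] [DecidableEq R]
    (hR : Fintype.card R = 2 * d + 2)
    (V₀ : Submodule (ZMod 2) (R → ZMod 2))
    (hV₀ : ∀ v : R → ZMod 2, v ∈ V₀ ↔ ∑ r, v r = 0)
    (one : V₀) (hone : (one : R → ZMod 2) = fun _ => 1)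
    (ρ : Equiv.Perm R →
        ((V₀ ⧸ Submodule.span (ZMod 2) {one}) →ₗ[ZMod 2]
          (V₀ ⧸ Submodule.span (ZMod 2) {one})))
    (hρ : ∀ (σ : Equiv.Perm R) (S T : V₀),
        (∀ r, (T : R → ZMod 2) (σ r) = (S : R → ZMod 2) r) →
        ρ σ (Submodule.Quotient.mk S) = Submodule.Quotient.mk T) :
    Nontrivial (V₀ ⧸ Submodule.span (ZMod 2) {one}) ∧
    (∀ W : Submodule (ZMod 2) (V₀ ⧸ Submodule.span (ZMod 2) {one}),
        (∀ σ : Equiv.Perm R, ∀ v ∈ W, ρ σ v ∈ W) → W = ⊥ ∨ W = ⊤) ∧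
    (∀ φ : (V₀ ⧸ Submodule.span (ZMod 2) {one}) →ₗ[ZMod 2]
        (V₀ ⧸ Submodule.span (ZMod 2) {one}),
      (∀ (σ : Equiv.Perm R) v, φ (ρ σ v) = ρ σ (φ v)) → φ = 0 ∨ φ = LinearMap.id) := by
  obtain rfl : V₀ = sumZero (ZMod 2) R := Submodule.ext hV₀
  have : Nonempty R := Fintype.card_pos_iff.mp (by omega)
  revert ρ
  rw [span_singleton_eq_constants hone]
  intro ρ hρ
  obtain rfl : ρ = Heart.perm (ZMod 2) := funext fun σ => Submodule.linearMap_qext _ <|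
    LinearMap.ext fun S => hρ σ S _ fun r => by simp
  have hcard : 2 < Fintype.card R := by omega
  have hn : (Fintype.card R : ZMod 2) = 0 := by
    rw [ZMod.natCast_eq_zero_iff]; omega
  refine ⟨Heart.nontrivial hcard, Heart.eq_bot_or_eq_top, fun φ hφ => ?_⟩
  obtain ⟨t, rfl⟩ := Heart.exists_eq_smul_id hn hcard hφ
  rcases (by decide : ∀ t : ZMod 2, t = 0 ∨ t = 1) t with rfl | rfl <;> simp
end

section
/- Let d ≥ 1 and let V be the quotient of the F₂-space of even-sized subsets of a (2d+2)-element set R by the span of R, with the natural Sym(R)-action. Then there exists a permutation g of R whose fixed subspace on V is zero, i.e. dim_{F₂} V^g = 0. In particular, one may take g to be a product of two disjoint (d+1)-cycles when d+1 is odd, or a (2d+2)-cycle. -/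
/-!
Take `σ` fixing a point `p` and cycling the other `2d + 1` points. If the class of an even set
`S` is fixed by `σ`, then `σ • S - S` is `∅` or `R`; it misses `p`, so `S` is `σ`-invariant, hence
constant on the orbit `R \ {p}`. That orbit has odd size and `|S|` is even, so `p ∈ S` exactly
when `S` meets the orbit: `S` is `∅` or `R`, i.e. zero in `V`.
-/

open Equiv Finset

theorem Equiv.Perm.IsCycleOn.apply_eq_of_comp_eq {α β : Type*} [Finite α] {σ : Perm α}
    {s : Set α} (hσ : σ.IsCycleOn s) {f : α → β} (hf : f ∘ σ = f) {a b : α} (ha : a ∈ s)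
    (hb : b ∈ s) : f a = f b := by
  have hpow (n : ℕ) : f ∘ ⇑(σ ^ n) = f := by
    induction n with
    | zero => rfl
    | succ n ih => rw [pow_succ, Perm.coe_mul, ← Function.comp_assoc, ih, hf]
  obtain ⟨n, rfl⟩ := hσ.exists_pow_eq' s.toFinite ha hb
  exact (congrFun (hpow n) a).symm

theorem Equiv.Perm.exists_isCycleOn_compl_singleton {α : Type*} [Fintype α] [DecidableEq α]
    (p : α) : ∃ σ : Perm α, σ.IsCycleOn {p}ᶜ ∧ σ p = p := by
  obtain ⟨σ, hcyc, hsupp⟩ := ({p}ᶜ : Finset α).exists_cycleOn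
  refine ⟨σ, by simpa using hcyc, Perm.notMem_support.mp fun hp => ?_⟩
  simpa using hsupp hp

theorem ZMod.apply_eq_of_sum_eq_zero_of_eq_on_compl {R : Type*} [Fintype R] (hR : Even (Fintype.card R))
    {S : R → ZMod 2} (hS : ∑ r, S r = 0) {p : R} (hconst : ∀ x ≠ p, ∀ y ≠ p, S x = S y)
    (r : R) : S r = S p := by
  classical
  rcases eq_or_ne r p with rfl | hrp
  · rfl
  have hodd : Odd (#(univ.erase p)) := by
    rw [card_erase_of_mem (mem_univ p), card_univ]
    exact Nat.Even.sub_odd (Fintype.card_pos_iff.mpr ⟨p⟩) hR odd_one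
  have hsum : ∑ x ∈ univ.erase p, S x = S r := by
    rw [sum_congr rfl fun x hx => hconst x (ne_of_mem_erase hx) r hrp, sum_const,
      nsmul_eq_mul, (ZMod.natCast_eq_one_iff_odd).mpr hodd, one_mul]
  rw [← add_sum_erase _ _ (mem_univ p), hsum, CharTwo.add_eq_zero] at hS
  exact hS.symm

theorem stmt_4_general (d : ℕ) (R : Type) [Fintype R]
    (hR : Fintype.card R = 2 * d + 2)
    (V₀ : Submodule (ZMod 2) (R → ZMod 2))
    (hV₀ : ∀ v : R → ZMod 2, v ∈ V₀ ↔ ∑ r, v r = 0)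
    (one : V₀) (hone : (one : R → ZMod 2) = fun _ => 1)
    (ρ : Equiv.Perm R →
        ((V₀ ⧸ Submodule.span (ZMod 2) {one}) →ₗ[ZMod 2]
          (V₀ ⧸ Submodule.span (ZMod 2) {one})))
    (hρ : ∀ (σ : Equiv.Perm R) (S T : V₀),
        (∀ r, (T : R → ZMod 2) (σ r) = (S : R → ZMod 2) r) →
        ρ σ (Submodule.Quotient.mk S) = Submodule.Quotient.mk T) :
    ∃ σ : Equiv.Perm R, ∀ v : V₀ ⧸ Submodule.span (ZMod 2) {one},
      ρ σ v = v → v = 0 := by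
  classical
  obtain ⟨p⟩ : Nonempty R := Fintype.card_pos_iff.mp (by omega)
  obtain ⟨σ, hcyc, hp⟩ := Perm.exists_isCycleOn_compl_singleton p
  refine ⟨σ, fun v hv => ?_⟩
  obtain ⟨⟨f, hf⟩, rfl⟩ := Submodule.Quotient.mk_surjective _ v
  have hsum : ∑ r, f r = 0 := (hV₀ f).1 hf
  let T : V₀ := ⟨f ∘ σ.symm, (hV₀ _).2 ((Equiv.sum_comp σ.symm f).trans hsum)⟩
  rw [hρ σ _ T fun r => by simp [T], Submodule.Quotient.eq,
    Submodule.mem_span_singleton] at hv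
  obtain ⟨a, ha⟩ := hv
  have hshift (r : R) : f (σ.symm r) - f r = a := by
    simpa [hone, T] using (congrFun (congrArg Subtype.val ha) r).symm
  have ha0 : a = 0 := by rw [← hshift p, σ.symm_apply_eq.mpr hp.symm, sub_self]
  have hinv : f ∘ σ = f := funext fun r => by
    simpa using (sub_eq_zero.mp ((hshift (σ r)).trans ha0)).symm
  have hconst := ZMod.apply_eq_of_sum_eq_zero_of_eq_on_compl ⟨d + 1, by omega⟩ hsum
    fun x hx y hy => hcyc.apply_eq_of_comp_eq hinv hx hy
  rw [Submodule.Quotient.mk_eq_zero, Submodule.mem_span_singleton]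
  exact ⟨f p, Subtype.ext (funext fun r => by simp [hone, hconst r])⟩

/-- For `d ≥ 1` there exists a permutation of `R` whose fixed subspace on
`V` is zero. -/
theorem stmt_4 (d : ℕ) (hd : 1 ≤ d) (R : Type) [Fintype R] [DecidableEq R]
    (hR : Fintype.card R = 2 * d + 2)
    (V₀ : Submodule (ZMod 2) (R → ZMod 2))
    (hV₀ : ∀ v : R → ZMod 2, v ∈ V₀ ↔ ∑ r, v r = 0)
    (one : V₀) (hone : (one : R → ZMod 2) = fun _ => 1)
    (ρ : Equiv.Perm R →
        ((V₀ ⧸ Submodule.span (ZMod 2) {one}) →ₗ[ZMod 2]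
          (V₀ ⧸ Submodule.span (ZMod 2) {one})))
    (hρ : ∀ (σ : Equiv.Perm R) (S T : V₀),
        (∀ r, (T : R → ZMod 2) (σ r) = (S : R → ZMod 2) r) →
        ρ σ (Submodule.Quotient.mk S) = Submodule.Quotient.mk T) :
    ∃ σ : Equiv.Perm R, ∀ v : V₀ ⧸ Submodule.span (ZMod 2) {one},
      ρ σ v = v → v = 0 :=
  stmt_4_general d R hR V₀ hV₀ one hone ρ hρ
end

section
/- Let G be a group, V a finite-dimensional F₂-vector space with G-action preserving a non-degenerate alternating bilinear form e: V × V → F₂, and let a, b: G → V be 1-cocycles. Let γ: G → F₂ be a 1-cochain with dγ = a ∪ b, i.e. γ(στ) + γ(σ) + γ(τ) = e(a(σ), σ·b(τ)) for all σ, τ. Let S = {σ ∈ G : V^σ = 0}, and for σ ∈ S define ψ(σ) = e(P_{a,σ}, b(σ)) + γ(σ), where P_{a,σ} is the unique element with a(σ) = σP_{a,σ} + P_{a,σ}. Then ψ is constant on conjugacy classes of G intersected with S: ψ(τστ⁻¹) = ψ(σ) for all σ ∈ S and τ ∈ G. -/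
/-!
Write `g = τστ⁻¹`. The cocycle identity gives `a g = a τ + τ a(σ) - g a(τ)`, so `τP - a τ`
solves `a g = g x - x`; since `g` has no nonzero fixed vector, this solution is unique and
`P_{a,g} = τP + a τ` in characteristic two. Likewise `b g = b τ + τ b(σ) + g b(τ)`, and
comparing `γ(g τ) = γ(τ σ)` through `dγ = a ∪ b` expresses `γ g` through `γ σ`. Expanding
`ψ(g)` bilinearly, the `G`-invariance of `e` turns `e(τP, τ b(σ))` into `e(P, b(σ))`, and
every other term occurs twice.
-/

section Cocycle

variable {G R V : Type*} [Group G] [Ring R] [AddCommGroup V] [Module R V]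
  {ρ : G →* Module.End R V} {a : G → V}

theorem cocycle_conj (ha : ∀ σ τ, a (σ * τ) = a σ + ρ σ (a τ)) (σ τ : G) :
    a (τ * σ * τ⁻¹) = a τ + ρ τ (a σ) - ρ (τ * σ * τ⁻¹) (a τ) := by
  rw [eq_sub_iff_add_eq, ← ha, inv_mul_cancel_right, ha]

theorem coboundary_conj (ha : ∀ σ τ, a (σ * τ) = a σ + ρ σ (a τ)) {σ : G} {P : V}
    (hP : a σ = ρ σ P - P) (τ : G) :
    a (τ * σ * τ⁻¹) = ρ (τ * σ * τ⁻¹) (ρ τ P - a τ) - (ρ τ P - a τ) := by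
  have hρ : ρ (τ * σ * τ⁻¹) (ρ τ P) = ρ τ (ρ σ P) := by
    rw [← Module.End.mul_apply, ← map_mul, inv_mul_cancel_right, map_mul, Module.End.mul_apply]
  rw [cocycle_conj ha, hP, map_sub, map_sub, hρ]
  abel

theorem eq_zero_of_conj_apply_eq {σ : G} (hσ : ∀ v : V, ρ σ v = v → v = 0) (τ : G) (v : V)
    (hv : ρ (τ * σ * τ⁻¹) v = v) : v = 0 := by
  have hfix : ρ σ (ρ τ⁻¹ v) = ρ τ⁻¹ v := by
    rw [← Module.End.mul_apply, ← map_mul, show σ * τ⁻¹ = τ⁻¹ * (τ * σ * τ⁻¹) by group,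
      map_mul, Module.End.mul_apply, hv]
  simpa using congrArg (ρ τ) (hσ _ hfix)

theorem coboundary_witness_unique {σ : G} (hσ : ∀ v : V, ρ σ v = v → v = 0) {P Q : V}
    (hP : a σ = ρ σ P - P) (hQ : a σ = ρ σ Q - Q) : P = Q := by
  refine sub_eq_zero.mp (hσ _ ?_)
  rw [map_sub, sub_eq_sub_iff_sub_eq_sub]
  exact hP.symm.trans hQ

end Cocycle

theorem cochain_conj_of_coboundary_eq {G K : Type*} [Group G] [AddCommGroup K]
    [Module (ZMod 2) K] {γ : G → K} {c : G → G → K}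
    (hγ : ∀ σ τ, γ (σ * τ) + γ σ + γ τ = c σ τ) (σ τ : G) :
    γ (τ * σ * τ⁻¹) = γ σ + c τ σ + c (τ * σ * τ⁻¹) τ := by
  rw [← hγ τ σ, ← hγ, inv_mul_cancel_right]
  abel_nf
  simp only [two_zsmul, ZModModule.add_self, zero_add]

theorem stmt_12_general {G V : Type} [Group G] [AddCommGroup V] [Module (ZMod 2) V]
    (ρ : G →* (V →ₗ[ZMod 2] V))
    (e : V →ₗ[ZMod 2] V →ₗ[ZMod 2] ZMod 2)
    (hinv : ∀ (g : G) (v w : V), e (ρ g v) (ρ g w) = e v w)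
    (a b : G → V)
    (ha : ∀ σ τ : G, a (σ * τ) = a σ + ρ σ (a τ))
    (hb : ∀ σ τ : G, b (σ * τ) = b σ + ρ σ (b τ))
    (γ : G → ZMod 2)
    (hγ : ∀ σ τ : G, γ (σ * τ) + γ σ + γ τ = e (a σ) (ρ σ (b τ)))
    (σ τ : G) (P Pc : V)
    (hσ : ∀ v : V, ρ σ v = v → v = 0)
    (hP : a σ = ρ σ P + P)
    (hPc : a (τ * σ * τ⁻¹) = ρ (τ * σ * τ⁻¹) Pc + Pc) :
    e Pc (b (τ * σ * τ⁻¹)) + γ (τ * σ * τ⁻¹) = e P (b σ) + γ σ := by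
  have hPc_eq : Pc = ρ τ P - a τ :=
    coboundary_witness_unique (eq_zero_of_conj_apply_eq hσ τ)
      (by rwa [ZModModule.sub_eq_add]) (coboundary_conj ha (by rwa [ZModModule.sub_eq_add]) τ)
  rw [cochain_conj_of_coboundary_eq hγ, hPc, hPc_eq, cocycle_conj hb]
  simp only [ZModModule.sub_eq_add, map_add, LinearMap.add_apply, hinv]
  ring_nf
  reduce_mod_char

/-- The function `ψ(σ) = e(P_{a,σ}, b(σ)) + γ(σ)`, defined on elements `σ`
with `V^σ = 0`, is constant on conjugacy classes. -/
theorem stmt_12 {G V : Type} [Group G] [AddCommGroup V] [Module (ZMod 2) V]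
    [FiniteDimensional (ZMod 2) V]
    (ρ : G →* (V →ₗ[ZMod 2] V))
    (e : V →ₗ[ZMod 2] V →ₗ[ZMod 2] ZMod 2)
    (halt : ∀ v : V, e v v = 0)
    (hnd : ∀ v : V, (∀ w : V, e v w = 0) → v = 0)
    (hinv : ∀ (g : G) (v w : V), e (ρ g v) (ρ g w) = e v w)
    (a b : G → V)
    (ha : ∀ σ τ : G, a (σ * τ) = a σ + ρ σ (a τ))
    (hb : ∀ σ τ : G, b (σ * τ) = b σ + ρ σ (b τ))
    (γ : G → ZMod 2)
    (hγ : ∀ σ τ : G, γ (σ * τ) + γ σ + γ τ = e (a σ) (ρ σ (b τ)))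
    (σ τ : G) (P Pc : V)
    (hσ : ∀ v : V, ρ σ v = v → v = 0)
    (hP : a σ = ρ σ P + P)
    (hPc : a (τ * σ * τ⁻¹) = ρ (τ * σ * τ⁻¹) Pc + Pc) :
    e Pc (b (τ * σ * τ⁻¹)) + γ (τ * σ * τ⁻¹) = e P (b σ) + γ σ :=
  stmt_12_general ρ e hinv a b ha hb γ hγ σ τ P Pc hσ hP hPc
end
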